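/- Key step of Theorem 3.1 (optimal projection): with the notation of the EOT characterization, for any coupling π ∈ Π(p₀,p₁) and any Schrödinger-bridge plan π^S of the form π^S(x₀,x₁) = p₀^S(x₀)·exp(⟨x₀,x₁⟩/ε)·v^S(x₁)/c_{v^S}(x₀), one has KL(π ‖ π^S) = Ĉ(π) + KL(π* ‖ π^S), where π* is the EOT plan between p₀ and p₁ and Ĉ(π) = −H(π) + H(π*) + (1/ε)[∫⟨x₀,x₁⟩dπ* − ∫⟨x₀,x₁⟩dπ] is independent of π^S. Consequently, arg min over π^S of KL(π‖π^S) equals arg min over π^S of KL(π*‖π^S), attained at π^S = π*. -/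

import Mathlib

open Real MeasureTheory

noncomputable section

abbrev Euc (D : ℕ) := EuclideanSpace ℝ (Fin D)

/-!
The logarithm of a plan of exponential form splits as `A x₀ + ⟪x₀, x₁⟫ / ε + B x₁`, and the
integral of `A x₀ + B x₁` against a plan only depends on its marginals. Since `π` and `π*` are
both couplings of `(p₀, p₁)`, for every such plan `Q` the difference `KL(π‖Q) - KL(π*‖Q)` is
`Ĉ(π)`, a quantity that does not involve `Q`. Taking `Q = π^S` gives the identity; taking
`Q = π*` shows `Ĉ(π) = KL(π‖π*)`, so the comparison is Gibbs' inequality `0 ≤ KL(π*‖π^S)`.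

The one analytic subtlety is that `A` and `B` need not be integrable separately, so the marginal
argument is run on the truncations of `A` and `B` to `[-n, n]` and passed to the limit by
dominated convergence, using `|truncate n a + truncate n b| ≤ |a + b|`.
-/

open Filter Topology

def truncate (n t : ℝ) : ℝ := max (-n) (min n t)

lemma continuous_truncate (n : ℝ) : Continuous (truncate n) := by
  unfold truncate; fun_prop

lemma truncate_cases {n : ℝ} (hn : 0 ≤ n) (t : ℝ) :
    (t ≤ -n ∧ truncate n t = -n) ∨ (-n ≤ t ∧ t ≤ n ∧ truncate n t = t) ∨
      (n ≤ t ∧ truncate n t = n) := by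
  unfold truncate
  rcases le_total t (-n) with h | h
  · exact Or.inl ⟨h, max_eq_left (min_le_of_right_le h)⟩
  rcases le_total t n with h' | h'
  · exact Or.inr (Or.inl ⟨h, h', by rw [min_eq_right h', max_eq_right h]⟩)
  · exact Or.inr (Or.inr ⟨h', by rw [min_eq_left h', max_eq_right (by linarith)]⟩)

lemma abs_truncate_le {n : ℝ} (hn : 0 ≤ n) (t : ℝ) : |truncate n t| ≤ n := by
  rw [abs_le]
  rcases truncate_cases hn t with ⟨-, h⟩ | ⟨h₁, h₂, h⟩ | ⟨-, h⟩ <;> constructor <;> linarith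

lemma abs_truncate_add_truncate_le {n : ℝ} (hn : 0 ≤ n) (a b : ℝ) :
    |truncate n a + truncate n b| ≤ |a + b| := by
  rw [abs_le]
  rcases truncate_cases hn a with ⟨ha₁, ha⟩ | ⟨ha₁, ha₂, ha⟩ | ⟨ha₁, ha⟩ <;>
  rcases truncate_cases hn b with ⟨hb₁, hb⟩ | ⟨hb₁, hb₂, hb⟩ | ⟨hb₁, hb⟩ <;>
  rcases abs_cases (a + b) with ⟨h, h'⟩ | ⟨h, h'⟩ <;>
  constructor <;> linarith

lemma tendsto_truncate (t : ℝ) : Tendsto (fun n : ℕ => truncate n t) atTop (𝓝 t) := by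
  refine tendsto_const_nhds.congr' ?_
  filter_upwards [eventually_ge_atTop ⌈|t|⌉₊] with n hn
  have h : |t| ≤ n := (Nat.le_ceil _).trans (by exact_mod_cast hn)
  rw [abs_le] at h
  simp [truncate, min_eq_right h.2, max_eq_right h.1]

lemma mul_add_eq_mul_log_sub_mul_log_div {r q a b s ε : ℝ} (hrq : r ≠ 0 → q ≠ 0)
    (hq : q ≠ 0 → log q = a + s / ε + b) :
    r * (a + b) = r * log r - r * log (r / q) - 1 / ε * (s * r) := by
  rcases eq_or_ne r 0 with rfl | hr
  · simp
  · rw [log_div hr (hrq hr), hq (hrq hr)]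
    ring

lemma sub_le_mul_log_div {x y : ℝ} (hx : 0 ≤ x) (hy : 0 < y) : x - y ≤ x * log (x / y) := by
  rcases hx.eq_or_lt with rfl | hx
  · simpa using hy.le
  · have h := one_sub_inv_le_log_of_pos (div_pos hx hy)
    rw [inv_div] at h
    calc x - y = x * (1 - y / x) := by field_simp
      _ ≤ x * log (x / y) := mul_le_mul_of_nonneg_left h hx.le

lemma log_mul_exp_mul_div {a s v c : ℝ} (h : a * exp s * v / c ≠ 0) :
    log (a * exp s * v / c) = log a - log c + s + log v := by
  have hc : c ≠ 0 := by rintro rfl; simp at h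
  have hav : a * exp s * v ≠ 0 := by rintro h'; simp [h'] at h
  have ha : a ≠ 0 := by rintro rfl; simp at hav
  have hv : v ≠ 0 := by rintro rfl; simp at hav
  rw [log_div hav hc, log_mul (mul_ne_zero ha (exp_pos s).ne') hv, log_mul ha (exp_pos s).ne',
    log_exp]
  ring

theorem integral_sub_integral_le_integral_mul_log_div {α : Type*} [MeasurableSpace α]
    {μ : Measure α} {f g : α → ℝ} (hf0 : ∀ x, 0 ≤ f x) (hg0 : ∀ x, 0 < g x)
    (hf : Integrable f μ) (hg : Integrable g μ)
    (hfg : Integrable (fun x => f x * log (f x / g x)) μ) :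
    ∫ x, f x ∂μ - ∫ x, g x ∂μ ≤ ∫ x, f x * log (f x / g x) ∂μ := by
  rw [← integral_sub hf hg]
  exact integral_mono (hf.sub hg) hfg fun x => sub_le_mul_log_div (hf0 x) (hg0 x)

section Marginals

variable {α β : Type*} [MeasurableSpace α] [MeasurableSpace β] {μ : Measure α} {ν : Measure β}
  {A : α → ℝ} {B : β → ℝ}

lemma integral_mul_add_eq_of_bounded [SFinite μ] [SFinite ν] {R : α → β → ℝ} {C : ℝ}
    (hR : Integrable (Function.uncurry R) (μ.prod ν))
    (hA : AEStronglyMeasurable A μ) (hB : AEStronglyMeasurable B ν)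
    (hAC : ∀ x, |A x| ≤ C) (hBC : ∀ y, |B y| ≤ C) :
    ∫ q, R q.1 q.2 * (A q.1 + B q.2) ∂μ.prod ν
      = ∫ x, (∫ y, R x y ∂ν) * A x ∂μ + ∫ y, (∫ x, R x y ∂μ) * B y ∂ν := by
  have iA : Integrable (fun q : α × β => R q.1 q.2 * A q.1) (μ.prod ν) :=
    hR.mul_bdd hA.comp_fst (ae_of_all _ fun q => hAC q.1)
  have iB : Integrable (fun q : α × β => R q.1 q.2 * B q.2) (μ.prod ν) :=
    hR.mul_bdd hB.comp_snd (ae_of_all _ fun q => hBC q.2)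
  simp only [mul_add]
  rw [integral_add iA iB, integral_prod _ iA, integral_prod_symm _ iB]
  simp only [integral_mul_const]

lemma tendsto_integral_mul_truncate_add {R : α → β → ℝ}
    (hR : AEStronglyMeasurable (Function.uncurry R) (μ.prod ν))
    (hA : AEStronglyMeasurable A μ) (hB : AEStronglyMeasurable B ν)
    (hRAB : Integrable (fun q : α × β => R q.1 q.2 * (A q.1 + B q.2)) (μ.prod ν)) :
    Tendsto (fun n : ℕ => ∫ q, R q.1 q.2 * (truncate n (A q.1) + truncate n (B q.2)) ∂μ.prod ν)
      atTop (𝓝 (∫ q, R q.1 q.2 * (A q.1 + B q.2) ∂μ.prod ν)) := by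
  refine tendsto_integral_of_dominated_convergence _ (fun n => ?_) hRAB.norm (fun n => ?_) ?_
  · exact hR.mul (((continuous_truncate n).comp_aestronglyMeasurable hA.comp_fst).add
      ((continuous_truncate n).comp_aestronglyMeasurable hB.comp_snd))
  · refine ae_of_all _ fun q => ?_
    simp only [norm_mul, Real.norm_eq_abs]
    exact mul_le_mul_of_nonneg_left (abs_truncate_add_truncate_le n.cast_nonneg _ _)
      (abs_nonneg _)
  · exact ae_of_all _ fun q =>
      ((tendsto_truncate (A q.1)).add (tendsto_truncate (B q.2))).const_mul _

theorem integral_mul_add_eq_of_marginals_eq [SFinite μ] [SFinite ν] {P Q : α → β → ℝ}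
    (hP : Integrable (Function.uncurry P) (μ.prod ν))
    (hQ : Integrable (Function.uncurry Q) (μ.prod ν))
    (h₁ : ∀ x, ∫ y, P x y ∂ν = ∫ y, Q x y ∂ν) (h₂ : ∀ y, ∫ x, P x y ∂μ = ∫ x, Q x y ∂μ)
    (hA : AEStronglyMeasurable A μ) (hB : AEStronglyMeasurable B ν)
    (hPAB : Integrable (fun q : α × β => P q.1 q.2 * (A q.1 + B q.2)) (μ.prod ν))
    (hQAB : Integrable (fun q : α × β => Q q.1 q.2 * (A q.1 + B q.2)) (μ.prod ν)) :
    ∫ q, P q.1 q.2 * (A q.1 + B q.2) ∂μ.prod ν = ∫ q, Q q.1 q.2 * (A q.1 + B q.2) ∂μ.prod ν := by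
  have hbdd (n : ℕ) (R : α → β → ℝ) (hR : Integrable (Function.uncurry R) (μ.prod ν)) :=
    integral_mul_add_eq_of_bounded hR ((continuous_truncate n).comp_aestronglyMeasurable hA)
      ((continuous_truncate n).comp_aestronglyMeasurable hB)
      (fun x => abs_truncate_le n.cast_nonneg (A x)) (fun y => abs_truncate_le n.cast_nonneg (B y))
  refine tendsto_nhds_unique (tendsto_integral_mul_truncate_add hP.1 hA hB hPAB) ?_
  refine (tendsto_integral_mul_truncate_add hQ.1 hA hB hQAB).congr fun n => ?_
  rw [hbdd n P hP, hbdd n Q hQ]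
  simp only [h₁, h₂]

theorem integral_mul_log_div_sub_integral_mul_log_div [SFinite μ] [SFinite ν]
    {P P' Q c : α → β → ℝ} {ε : ℝ}
    (hP : Integrable (Function.uncurry P) (μ.prod ν))
    (hP' : Integrable (Function.uncurry P') (μ.prod ν))
    (h₁ : ∀ x, ∫ y, P x y ∂ν = ∫ y, P' x y ∂ν) (h₂ : ∀ y, ∫ x, P x y ∂μ = ∫ x, P' x y ∂μ)
    (hA : AEStronglyMeasurable A μ) (hB : AEStronglyMeasurable B ν)
    (hQ : ∀ x y, Q x y ≠ 0 → log (Q x y) = A x + c x y / ε + B y)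
    (hPQ : ∀ x y, P x y ≠ 0 → Q x y ≠ 0) (hP'Q : ∀ x y, P' x y ≠ 0 → Q x y ≠ 0)
    (hPlogPQ : Integrable (fun q : α × β => P q.1 q.2 * log (P q.1 q.2 / Q q.1 q.2)) (μ.prod ν))
    (hP'logP'Q :
      Integrable (fun q : α × β => P' q.1 q.2 * log (P' q.1 q.2 / Q q.1 q.2)) (μ.prod ν))
    (hPlogP : Integrable (fun q : α × β => P q.1 q.2 * log (P q.1 q.2)) (μ.prod ν))
    (hP'logP' : Integrable (fun q : α × β => P' q.1 q.2 * log (P' q.1 q.2)) (μ.prod ν))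
    (hcP : Integrable (fun q : α × β => c q.1 q.2 * P q.1 q.2) (μ.prod ν))
    (hcP' : Integrable (fun q : α × β => c q.1 q.2 * P' q.1 q.2) (μ.prod ν)) :
    ∫ q, P q.1 q.2 * log (P q.1 q.2 / Q q.1 q.2) ∂μ.prod ν
        - ∫ q, P' q.1 q.2 * log (P' q.1 q.2 / Q q.1 q.2) ∂μ.prod ν
      = ∫ q, P q.1 q.2 * log (P q.1 q.2) ∂μ.prod ν - ∫ q, P' q.1 q.2 * log (P' q.1 q.2) ∂μ.prod ν
        + 1 / ε * (∫ q, c q.1 q.2 * P' q.1 q.2 ∂μ.prod ν - ∫ q, c q.1 q.2 * P q.1 q.2 ∂μ.prod ν) := by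
  have hsum (R : α → β → ℝ) (hRQ : ∀ x y, R x y ≠ 0 → Q x y ≠ 0)
      (hRlogRQ : Integrable (fun q : α × β => R q.1 q.2 * log (R q.1 q.2 / Q q.1 q.2)) (μ.prod ν))
      (hRlogR : Integrable (fun q : α × β => R q.1 q.2 * log (R q.1 q.2)) (μ.prod ν))
      (hcR : Integrable (fun q : α × β => c q.1 q.2 * R q.1 q.2) (μ.prod ν)) :
      Integrable (fun q : α × β => R q.1 q.2 * (A q.1 + B q.2)) (μ.prod ν) ∧
      ∫ q, R q.1 q.2 * (A q.1 + B q.2) ∂μ.prod ν = ∫ q, R q.1 q.2 * log (R q.1 q.2) ∂μ.prod ν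
        - ∫ q, R q.1 q.2 * log (R q.1 q.2 / Q q.1 q.2) ∂μ.prod ν
        - 1 / ε * ∫ q, c q.1 q.2 * R q.1 q.2 ∂μ.prod ν := by
    have hsplit : (fun q : α × β => R q.1 q.2 * (A q.1 + B q.2)) = fun q =>
        R q.1 q.2 * log (R q.1 q.2) - R q.1 q.2 * log (R q.1 q.2 / Q q.1 q.2)
          - 1 / ε * (c q.1 q.2 * R q.1 q.2) :=
      funext fun q => mul_add_eq_mul_log_sub_mul_log_div (hRQ q.1 q.2) (hQ q.1 q.2)
    rw [hsplit]
    refine ⟨(hRlogR.sub hRlogRQ).sub (hcR.const_mul _), ?_⟩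
    rw [integral_sub _ (hcR.const_mul _), integral_sub hRlogR hRlogRQ, integral_const_mul]
    exact hRlogR.sub hRlogRQ
  obtain ⟨hPAB, hPeq⟩ := hsum P hPQ hPlogPQ hPlogP hcP
  obtain ⟨hP'AB, hP'eq⟩ := hsum P' hP'Q hP'logP'Q hP'logP' hcP'
  have key := integral_mul_add_eq_of_marginals_eq hP hP' h₁ h₂ hA hB hPAB hP'AB
  rw [hPeq, hP'eq] at key
  linarith

end Marginals

section ExponentialForm

variable {E : Type*} [NormedAddCommGroup E] [InnerProductSpace ℝ E] [MeasurableSpace E]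
  {μ : Measure E} {ε : ℝ} {v c : E → ℝ}

lemma integrable_of_eq_integral_exp_inner_mul
    (hc : ∀ x, c x = ∫ y, exp (inner ℝ x y / ε) * v y ∂μ) (hc0 : c 0 ≠ 0) : Integrable v μ := by
  refine Integrable.of_integral_ne_zero ?_
  simpa [hc 0] using hc0

lemma aestronglyMeasurable_of_eq_integral_exp_inner_mul [BorelSpace E]
    [SecondCountableTopology E] [SFinite μ]
    (hc : ∀ x, c x = ∫ y, exp (inner ℝ x y / ε) * v y ∂μ) (hv : AEStronglyMeasurable v μ) :
    AEStronglyMeasurable c μ := by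
  have hjoint : AEStronglyMeasurable (fun q : E × E => exp (inner ℝ q.1 q.2 / ε) * v q.2)
      (μ.prod μ) := by
    refine Continuous.aestronglyMeasurable ?_ |>.mul hv.comp_snd
    fun_prop
  exact hjoint.integral_prod_right'.congr (ae_of_all _ fun x => (hc x).symm)

lemma integral_mul_exp_inner_mul_div {a : E → ℝ}
    (hc : ∀ x, c x = ∫ y, exp (inner ℝ x y / ε) * v y ∂μ) (hc0 : ∀ x, c x ≠ 0) (x : E) :
    ∫ y, a x * exp (inner ℝ x y / ε) * v y / c x ∂μ = a x := by
  calc ∫ y, a x * exp (inner ℝ x y / ε) * v y / c x ∂μ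
      = ∫ y, a x / c x * (exp (inner ℝ x y / ε) * v y) ∂μ := by
        congr 1; funext y; ring
    _ = a x := by rw [integral_const_mul, ← hc, div_mul_cancel₀ _ (hc0 x)]

theorem exists_log_eq_add_of_eq_exp_inner [BorelSpace E] [SecondCountableTopology E]
    [SFinite μ] {Q : E → E → ℝ} {a : E → ℝ}
    (hQ : ∀ x y, Q x y = a x * exp (inner ℝ x y / ε) * v y / c x)
    (hc : ∀ x, c x = ∫ y, exp (inner ℝ x y / ε) * v y ∂μ) (hc0 : ∀ x, c x ≠ 0)
    (hQint : Integrable (Function.uncurry Q) (μ.prod μ)) :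
    ∃ A B : E → ℝ, AEStronglyMeasurable A μ ∧ AEStronglyMeasurable B μ ∧
      ∀ x y, Q x y ≠ 0 → log (Q x y) = A x + inner ℝ x y / ε + B y := by
  have hv := (integrable_of_eq_integral_exp_inner_mul hc (hc0 0)).aestronglyMeasurable
  have hcm := aestronglyMeasurable_of_eq_integral_exp_inner_mul hc hv
  have ha : AEStronglyMeasurable a μ := hQint.1.integral_prod_right'.congr
    (ae_of_all _ fun x => by
      simp only [Function.uncurry_apply_pair, hQ]
      exact integral_mul_exp_inner_mul_div hc hc0 x)
  refine ⟨fun x => log (a x) - log (c x), fun y => log (v y),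
    (ha.aemeasurable.log.sub hcm.aemeasurable.log).aestronglyMeasurable,
    hv.aemeasurable.log.aestronglyMeasurable, fun x y h => ?_⟩
  rw [hQ] at h ⊢
  exact log_mul_exp_mul_div h

end ExponentialForm

theorem optimal_projection_key_step_general (D : ℕ) (ε : ℝ)
    (p0 p1 p0S vstar vS cstar cS : Euc D → ℝ)
    (P Pstar PS : Euc D → Euc D → ℝ)
    (hvSpos : ∀ x1, 0 < vS x1)
    (hp0Spos : ∀ x0, 0 < p0S x0)
    (hPstarnn : ∀ x0 x1, 0 ≤ Pstar x0 x1)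
    (hcstar : ∀ x0, cstar x0 = ∫ x1, Real.exp ((inner ℝ x0 x1 : ℝ) / ε) * vstar x1)
    (hcS : ∀ x0, cS x0 = ∫ x1, Real.exp ((inner ℝ x0 x1 : ℝ) / ε) * vS x1)
    (hcstarpos : ∀ x0, 0 < cstar x0) (hcSpos : ∀ x0, 0 < cS x0)
    (hPstar : ∀ x0 x1, Pstar x0 x1
      = p0 x0 * Real.exp ((inner ℝ x0 x1 : ℝ) / ε) * vstar x1 / cstar x0)
    (hPS : ∀ x0 x1, PS x0 x1
      = p0S x0 * Real.exp ((inner ℝ x0 x1 : ℝ) / ε) * vS x1 / cS x0)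
    -- π and π* are couplings of (p₀, p₁); π* and π^S are probability densities
    (hPm0 : ∀ x0, ∫ x1, P x0 x1 = p0 x0) (hPm1 : ∀ x1, ∫ x0, P x0 x1 = p1 x1)
    (hPstarm0 : ∀ x0, ∫ x1, Pstar x0 x1 = p0 x0)
    (hPstarm1 : ∀ x1, ∫ x0, Pstar x0 x1 = p1 x1)
    (hPprob : ∫ q : Euc D × Euc D, P q.1 q.2 = 1)
    (hPstarprob : ∫ q : Euc D × Euc D, Pstar q.1 q.2 = 1)
    (hPSprob : ∫ q : Euc D × Euc D, PS q.1 q.2 = 1)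
    (hacstar : ∀ x0 x1, Pstar x0 x1 = 0 → P x0 x1 = 0)
    -- integrability of all involved integrands
    (hint1 : Integrable (fun q : Euc D × Euc D =>
      P q.1 q.2 * Real.log (P q.1 q.2 / PS q.1 q.2)))
    (hint2 : Integrable (fun q : Euc D × Euc D =>
      Pstar q.1 q.2 * Real.log (Pstar q.1 q.2 / PS q.1 q.2)))
    (hint2' : Integrable (fun q : Euc D × Euc D =>
      P q.1 q.2 * Real.log (P q.1 q.2 / Pstar q.1 q.2)))
    (hint3 : Integrable (fun q : Euc D × Euc D => (inner ℝ q.1 q.2 : ℝ) * P q.1 q.2))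
    (hint4 : Integrable (fun q : Euc D × Euc D => (inner ℝ q.1 q.2 : ℝ) * Pstar q.1 q.2))
    (hint5 : Integrable (fun q : Euc D × Euc D => P q.1 q.2 * Real.log (P q.1 q.2)))
    (hint6 : Integrable (fun q : Euc D × Euc D =>
      Pstar q.1 q.2 * Real.log (Pstar q.1 q.2)))
    -- Ĉ(π)
    (Chat : ℝ)
    (hChat : Chat
      = -(-∫ q : Euc D × Euc D, P q.1 q.2 * Real.log (P q.1 q.2))
          + (-∫ q : Euc D × Euc D, Pstar q.1 q.2 * Real.log (Pstar q.1 q.2))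
          + (1 / ε) * ((∫ q : Euc D × Euc D, (inner ℝ q.1 q.2 : ℝ) * Pstar q.1 q.2)
              - ∫ q : Euc D × Euc D, (inner ℝ q.1 q.2 : ℝ) * P q.1 q.2)) :
    (∫ q : Euc D × Euc D, P q.1 q.2 * Real.log (P q.1 q.2 / PS q.1 q.2))
        = Chat + ∫ q : Euc D × Euc D, Pstar q.1 q.2 * Real.log (Pstar q.1 q.2 / PS q.1 q.2)
      ∧ (∫ q : Euc D × Euc D, P q.1 q.2 * Real.log (P q.1 q.2 / Pstar q.1 q.2))
          ≤ ∫ q : Euc D × Euc D, P q.1 q.2 * Real.log (P q.1 q.2 / PS q.1 q.2) := by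
  have iP := Integrable.of_integral_ne_zero (hPprob ▸ one_ne_zero)
  have iPstar := Integrable.of_integral_ne_zero (hPstarprob ▸ one_ne_zero)
  have iPS := Integrable.of_integral_ne_zero (hPSprob ▸ one_ne_zero)
  have hPSpos (x y : Euc D) : 0 < PS x y := by
    rw [hPS]
    exact div_pos (mul_pos (mul_pos (hp0Spos x) (exp_pos _)) (hvSpos y)) (hcSpos x)
  have h₁ (x : Euc D) : ∫ y, P x y = ∫ y, Pstar x y := (hPm0 x).trans (hPstarm0 x).symm
  have h₂ (y : Euc D) : ∫ x, P x y = ∫ x, Pstar x y := (hPm1 y).trans (hPstarm1 y).symm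
  obtain ⟨AS, BS, hAS, hBS, hlogS⟩ :=
    exists_log_eq_add_of_eq_exp_inner hPS hcS (fun x => (hcSpos x).ne') iPS
  obtain ⟨Astar, Bstar, hAstar, hBstar, hlogstar⟩ :=
    exists_log_eq_add_of_eq_exp_inner hPstar hcstar (fun x => (hcstarpos x).ne') iPstar
  have hKL_S := integral_mul_log_div_sub_integral_mul_log_div iP iPstar h₁ h₂ hAS hBS hlogS
    (fun x y _ => (hPSpos x y).ne') (fun x y _ => (hPSpos x y).ne')
    hint1 hint2 hint5 hint6 hint3 hint4
  have hself : (fun q : Euc D × Euc D => Pstar q.1 q.2 * log (Pstar q.1 q.2 / Pstar q.1 q.2))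
      = fun _ => 0 := by
    funext q; simp
  have hKL_star := integral_mul_log_div_sub_integral_mul_log_div iP iPstar h₁ h₂ hAstar hBstar
    hlogstar (fun x y => mt (hacstar x y)) (fun _ _ h => h)
    hint2' (hself ▸ integrable_zero _ _ _) hint5 hint6 hint3 hint4
  have hgibbs := integral_sub_integral_le_integral_mul_log_div
    (fun q : Euc D × Euc D => hPstarnn q.1 q.2) (fun q : Euc D × Euc D => hPSpos q.1 q.2)
    iPstar iPS hint2
  rw [hself, integral_zero] at hKL_star
  rw [← Measure.volume_eq_prod] at hKL_S hKL_star
  rw [hPstarprob, hPSprob] at hgibbs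
  constructor <;> linarith

/-- Key step of the optimal projection theorem: for any coupling `π ∈ Π(p₀,p₁)` and any
Schrödinger-bridge plan `π^S(x₀,x₁) = p₀^S(x₀) exp(⟨x₀,x₁⟩/ε) v^S(x₁)/c_{v^S}(x₀)`,
`KL(π‖π^S) = Ĉ(π) + KL(π*‖π^S)` where `π*` is the EOT plan between `p₀,p₁` (itself of the
exponential form with marginal `p₀` and potential `v*`) and
`Ĉ(π) = −H(π) + H(π*) + (1/ε)[∫⟨x₀,x₁⟩dπ* − ∫⟨x₀,x₁⟩dπ]` does not depend on `π^S`;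
consequently the minimum of `KL(π‖·)` over such plans is attained at `π^S = π*`. -/
theorem optimal_projection_key_step (D : ℕ) (ε : ℝ) (hε : 0 < ε)
    (p0 p1 p0S vstar vS cstar cS : Euc D → ℝ)
    (P Pstar PS : Euc D → Euc D → ℝ)
    (hvstarpos : ∀ x1, 0 < vstar x1) (hvSpos : ∀ x1, 0 < vS x1)
    (hp0Spos : ∀ x0, 0 < p0S x0) (hp0nn : ∀ x0, 0 ≤ p0 x0)
    (hPnn : ∀ x0 x1, 0 ≤ P x0 x1) (hPstarnn : ∀ x0 x1, 0 ≤ Pstar x0 x1)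
    (hcstar : ∀ x0, cstar x0 = ∫ x1, Real.exp ((inner ℝ x0 x1 : ℝ) / ε) * vstar x1)
    (hcS : ∀ x0, cS x0 = ∫ x1, Real.exp ((inner ℝ x0 x1 : ℝ) / ε) * vS x1)
    (hcstarpos : ∀ x0, 0 < cstar x0) (hcSpos : ∀ x0, 0 < cS x0)
    (hPstar : ∀ x0 x1, Pstar x0 x1
      = p0 x0 * Real.exp ((inner ℝ x0 x1 : ℝ) / ε) * vstar x1 / cstar x0)
    (hPS : ∀ x0 x1, PS x0 x1
      = p0S x0 * Real.exp ((inner ℝ x0 x1 : ℝ) / ε) * vS x1 / cS x0)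
    -- π and π* are couplings of (p₀, p₁); π* and π^S are probability densities
    (hPm0 : ∀ x0, ∫ x1, P x0 x1 = p0 x0) (hPm1 : ∀ x1, ∫ x0, P x0 x1 = p1 x1)
    (hPstarm0 : ∀ x0, ∫ x1, Pstar x0 x1 = p0 x0)
    (hPstarm1 : ∀ x1, ∫ x0, Pstar x0 x1 = p1 x1)
    (hPprob : ∫ q : Euc D × Euc D, P q.1 q.2 = 1)
    (hPstarprob : ∫ q : Euc D × Euc D, Pstar q.1 q.2 = 1)
    (hPSprob : ∫ q : Euc D × Euc D, PS q.1 q.2 = 1)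
    (hac : ∀ x0 x1, PS x0 x1 = 0 → P x0 x1 = 0)
    (hacstar : ∀ x0 x1, Pstar x0 x1 = 0 → P x0 x1 = 0)
    -- integrability of all involved integrands
    (hint1 : Integrable (fun q : Euc D × Euc D =>
      P q.1 q.2 * Real.log (P q.1 q.2 / PS q.1 q.2)))
    (hint2 : Integrable (fun q : Euc D × Euc D =>
      Pstar q.1 q.2 * Real.log (Pstar q.1 q.2 / PS q.1 q.2)))
    (hint2' : Integrable (fun q : Euc D × Euc D =>
      P q.1 q.2 * Real.log (P q.1 q.2 / Pstar q.1 q.2)))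
    (hint3 : Integrable (fun q : Euc D × Euc D => (inner ℝ q.1 q.2 : ℝ) * P q.1 q.2))
    (hint4 : Integrable (fun q : Euc D × Euc D => (inner ℝ q.1 q.2 : ℝ) * Pstar q.1 q.2))
    (hint5 : Integrable (fun q : Euc D × Euc D => P q.1 q.2 * Real.log (P q.1 q.2)))
    (hint6 : Integrable (fun q : Euc D × Euc D =>
      Pstar q.1 q.2 * Real.log (Pstar q.1 q.2)))
    -- Ĉ(π)
    (Chat : ℝ)
    (hChat : Chat
      = -(-∫ q : Euc D × Euc D, P q.1 q.2 * Real.log (P q.1 q.2))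
          + (-∫ q : Euc D × Euc D, Pstar q.1 q.2 * Real.log (Pstar q.1 q.2))
          + (1 / ε) * ((∫ q : Euc D × Euc D, (inner ℝ q.1 q.2 : ℝ) * Pstar q.1 q.2)
              - ∫ q : Euc D × Euc D, (inner ℝ q.1 q.2 : ℝ) * P q.1 q.2)) :
    (∫ q : Euc D × Euc D, P q.1 q.2 * Real.log (P q.1 q.2 / PS q.1 q.2))
        = Chat + ∫ q : Euc D × Euc D, Pstar q.1 q.2 * Real.log (Pstar q.1 q.2 / PS q.1 q.2)
      ∧ (∫ q : Euc D × Euc D, P q.1 q.2 * Real.log (P q.1 q.2 / Pstar q.1 q.2))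
          ≤ ∫ q : Euc D × Euc D, P q.1 q.2 * Real.log (P q.1 q.2 / PS q.1 q.2) :=
  optimal_projection_key_step_general D ε p0 p1 p0S vstar vS cstar cS P Pstar PS hvSpos hp0Spos
    hPstarnn hcstar hcS hcstarpos hcSpos hPstar hPS hPm0 hPm1 hPstarm0 hPstarm1 hPprob hPstarprob
    hPSprob hacstar hint1 hint2 hint2' hint3 hint4 hint5 hint6 Chat hChat

end
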